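/- If S^1 × RP^3 is realized as the boundary of a tubular neighborhood D^2 × RP^3 of an embedded RP^3 in R^5 with trivial normal bundle, then composing with the affine chart inclusion R^5 ⊂ RP^5 yields a smooth embedding S^1 × RP^3 → RP^5. In particular, a smooth embedding S^1 × RP^3 → RP^5 exists. -/

import Mathlib

open scoped LinearAlgebra.Projectivization

noncomputable section

noncomputable instance projTopInstance {K V : Type*} [DivisionRing K] [AddCommGroup V]
    [Module K V] [TopologicalSpace V] : TopologicalSpace (Projectivization K V) := by
  unfold Projectivization; infer_instance

/-- Real projective `k`-space. -/
abbrev RPt (k : ℕ) := Projectivization ℝ (Fin (k+1) → ℝ)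

/-- The circle, as the unit sphere in `ℝ²`. -/
abbrev Circ := (Metric.sphere (0 : EuclideanSpace ℝ (Fin 2)) 1)

/-- A map `f : S¹ × ℝP³ → ℝP⁵` is smooth if near every point it admits local smooth
lifts on representing data: a smooth nonvanishing map `F : ℝ² × ℝ⁴ → ℝ⁶` inducing `f`. -/
def IsSmoothCircleRPMap (f : Circ × RPt 3 → RPt 5) : Prop :=
  ∀ (x : Circ) (v : Fin 4 → ℝ) (hv : v ≠ 0),
    ∃ O : Set ((EuclideanSpace ℝ (Fin 2)) × (Fin 4 → ℝ)), IsOpen O ∧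
      ((x : EuclideanSpace ℝ (Fin 2)), v) ∈ O ∧
      ∃ F : (EuclideanSpace ℝ (Fin 2)) × (Fin 4 → ℝ) → (Fin 6 → ℝ),
        ContDiffOn ℝ (⊤ : ℕ∞) F O ∧
        ∀ p ∈ O, ∀ hp1 : p.1 ∈ Metric.sphere (0 : EuclideanSpace ℝ (Fin 2)) 1,
          ∀ hp2 : p.2 ≠ 0,
            ∃ hF : F p ≠ 0,
              f (⟨p.1, hp1⟩, Projectivization.mk ℝ p.2 hp2) = Projectivization.mk ℝ (F p) hF

open Quaternion
namespace RP5E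

/- ### scalar coordinate functions -/
def u1 (v : Fin 4 → ℝ) : ℝ := v 0^2 + v 1^2 - v 2^2 - v 3^2
def u2 (v : Fin 4 → ℝ) : ℝ := 2*(v 1*v 2 + v 0*v 3)
def u3 (v : Fin 4 → ℝ) : ℝ := 2*(v 1*v 3 - v 0*v 2)
def w1 (v : Fin 4 → ℝ) : ℝ := 2*(v 1*v 2 - v 0*v 3)
def w2 (v : Fin 4 → ℝ) : ℝ := v 0^2 - v 1^2 + v 2^2 - v 3^2
def w3 (v : Fin 4 → ℝ) : ℝ := 2*(v 2*v 3 + v 0*v 1)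
def nn (v : Fin 4 → ℝ) : ℝ := v 0^2 + v 1^2 + v 2^2 + v 3^2
def rr : ℝ := Real.sqrt 20

lemma rr_sq : rr^2 = 20 := Real.sq_sqrt (by norm_num)
lemma rr_gt : 4 < rr := by
  have h4 : (4:ℝ) = Real.sqrt 16 := by
    rw [show (16:ℝ) = 4^2 by norm_num, Real.sqrt_sq (by norm_num : (0:ℝ) ≤ 4)]
  rw [rr, h4]
  exact Real.sqrt_lt_sqrt (by norm_num) (by norm_num)

lemma nn_pos {v : Fin 4 → ℝ} (hv : v ≠ 0) : 0 < nn v := by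
  by_contra hle
  push_neg at hle
  rw [nn] at hle
  apply hv
  have e0 : v 0 = 0 := by
    have : v 0^2 ≤ 0 := by nlinarith [sq_nonneg (v 1), sq_nonneg (v 2), sq_nonneg (v 3)]
    exact pow_eq_zero_iff (n := 2) (by norm_num) |>.1 (le_antisymm this (sq_nonneg _))
  have e1 : v 1 = 0 := by
    have : v 1^2 ≤ 0 := by nlinarith [sq_nonneg (v 0), sq_nonneg (v 2), sq_nonneg (v 3)]
    exact pow_eq_zero_iff (n := 2) (by norm_num) |>.1 (le_antisymm this (sq_nonneg _))
  have e2 : v 2 = 0 := by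
    have : v 2^2 ≤ 0 := by nlinarith [sq_nonneg (v 0), sq_nonneg (v 1), sq_nonneg (v 3)]
    exact pow_eq_zero_iff (n := 2) (by norm_num) |>.1 (le_antisymm this (sq_nonneg _))
  have e3 : v 3 = 0 := by
    have : v 3^2 ≤ 0 := by nlinarith [sq_nonneg (v 0), sq_nonneg (v 1), sq_nonneg (v 2)]
    exact pow_eq_zero_iff (n := 2) (by norm_num) |>.1 (le_antisymm this (sq_nonneg _))
  funext i
  fin_cases i
  · exact e0
  · exact e1
  · exact e2
  · exact e3

lemma Tpos {a b : ℝ} (hx : a^2 + b^2 = 1) {v : Fin 4 → ℝ} (hv : v ≠ 0) :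
    0 < rr * nn v - ((3+a)*u1 v + b*w1 v) := by
  have hn := nn_pos hv
  have hrow : (u1 v)^2 + (w1 v)^2 + (2*(v 1*v 3 + v 0*v 2))^2 = (nn v)^2 := by
    simp only [u1, w1, nn]; ring
  have hCS : ((3+a)*u1 v + b*w1 v)^2 ≤ ((3+a)^2 + b^2) * ((u1 v)^2 + (w1 v)^2) := by
    nlinarith [sq_nonneg ((3+a)*w1 v - b*u1 v)]
  have hco : (3+a)^2 + b^2 ≤ 16 := by nlinarith [sq_nonneg (a-1), sq_nonneg (a+1)]
  have huw : (u1 v)^2 + (w1 v)^2 ≤ (nn v)^2 := by nlinarith [sq_nonneg (2*(v 1*v 3 + v 0*v 2))]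
  have hE2 : ((3+a)*u1 v + b*w1 v)^2 ≤ 16 * (nn v)^2 := by
    nlinarith [sq_nonneg (u1 v), sq_nonneg (w1 v), sq_nonneg ((3+a)*u1 v + b*w1 v)]
  have h4 : (3+a)*u1 v + b*w1 v ≤ 4 * nn v := by nlinarith
  nlinarith [rr_gt, hn]

/- ### the 6-component lift -/
def Et (a b : ℝ) (v : Fin 4 → ℝ) : Fin 6 → ℝ :=
  ![rr * nn v - ((3+a)*u1 v + b*w1 v),
    (3+a)*u2 v + b*w2 v,
    (3+a)*u3 v + b*w3 v,
    b*u1 v + (3-a)*w1 v,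
    b*u2 v + (3-a)*w2 v,
    b*u3 v + (3-a)*w3 v]

lemma Et_zero (a b : ℝ) (v : Fin 4 → ℝ) : Et a b v 0 = rr * nn v - ((3+a)*u1 v + b*w1 v) := rfl

lemma Et_smul (a b : ℝ) (v : Fin 4 → ℝ) (c : ℝ) : Et a b (c • v) = (c^2) • Et a b v := by
  have sc : ∀ i : Fin 4, (c • v) i = c * v i := fun _ => rfl
  funext i
  rw [Pi.smul_apply, smul_eq_mul]
  fin_cases i
  · show Et a b (c • v) 0 = _ * Et a b v 0
    show rr * nn (c • v) - ((3+a)*u1 (c • v) + b*w1 (c • v)) = _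
    simp only [u1, w1, nn, sc, Et_zero]; ring
  · show Et a b (c • v) 1 = _ * Et a b v 1
    show (3+a)*u2 (c • v) + b*w2 (c • v) = _ * ((3+a)*u2 v + b*w2 v)
    simp only [u2, w2, sc]; ring
  · show Et a b (c • v) 2 = _ * Et a b v 2
    show (3+a)*u3 (c • v) + b*w3 (c • v) = _ * ((3+a)*u3 v + b*w3 v)
    simp only [u3, w3, sc]; ring
  · show Et a b (c • v) 3 = _ * Et a b v 3
    show b*u1 (c • v) + (3-a)*w1 (c • v) = _ * (b*u1 v + (3-a)*w1 v)
    simp only [u1, w1, sc]; ring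
  · show Et a b (c • v) 4 = _ * Et a b v 4
    show b*u2 (c • v) + (3-a)*w2 (c • v) = _ * (b*u2 v + (3-a)*w2 v)
    simp only [u2, w2, sc]; ring
  · show Et a b (c • v) 5 = _ * Et a b v 5
    show b*u3 (c • v) + (3-a)*w3 (c • v) = _ * (b*u3 v + (3-a)*w3 v)
    simp only [u3, w3, sc]; ring

lemma Et_pos {a b : ℝ} (hx : a^2 + b^2 = 1) {v : Fin 4 → ℝ} (hv : v ≠ 0) :
    0 < Et a b v 0 := Tpos hx hv

lemma Et_ne {a b : ℝ} (hx : a^2 + b^2 = 1) {v : Fin 4 → ℝ} (hv : v ≠ 0) :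
    Et a b v ≠ 0 := by
  intro h
  have := congrFun h 0
  rw [Pi.zero_apply] at this
  exact (ne_of_gt (Et_pos hx hv)) this

lemma pos_scale {x y c : ℝ} (hx : 0 < x) (hy : 0 < y) (h : x = c*y) : 0 < c := by
  nlinarith

lemma neg_fact {g' n' : ℝ} (hT' : 0 < rr*n' - g') (hn' : 0 < n') : rr*g' - 20*n' < 0 := by
  have h1 : 0 < rr := by linarith [rr_gt]
  have h2 : g' < rr * n' := by linarith
  have h3 : rr * g' < rr * (rr * n') := by exact mul_lt_mul_of_pos_left h2 h1
  nlinarith [rr_sq]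

lemma factor_zero {x y : ℝ} (hy : 0 < y) (h : 6*x*y^2 = 0) : x = 0 := by
  have hy2 : y^2 ≠ 0 := by positivity
  have := mul_eq_zero.1 h
  rcases this with h' | h'
  · rcases mul_eq_zero.1 h' with h'' | h''
    · norm_num at h''
    · exact h''
  · exact absurd h' hy2

set_option maxHeartbeats 1000000 in
lemma abstract_core (a b a' b' c n n' p1 p2 p3 r1 r2 r3 p1' p2' p3' r1' r2' r3' : ℝ)
    (hx : a^2 + b^2 = 1) (hx' : a'^2 + b'^2 = 1) (hn : 0 < n) (hn' : 0 < n')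
    (I1 : p1^2 + p2^2 + p3^2 = n^2) (I2 : r1^2 + r2^2 + r3^2 = n^2)
    (I3 : p1*r1 + p2*r2 + p3*r3 = 0)
    (I1' : p1'^2 + p2'^2 + p3'^2 = n'^2) (I2' : r1'^2 + r2'^2 + r3'^2 = n'^2)
    (I3' : p1'*r1' + p2'*r2' + p3'*r3' = 0)
    (hT : 0 < rr*n - ((3+a)*p1 + b*r1)) (hT' : 0 < rr*n' - ((3+a')*p1' + b'*r1'))
    (h0 : rr*n - ((3+a)*p1 + b*r1) = c * (rr*n' - ((3+a')*p1' + b'*r1')))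
    (h1 : (3+a)*p2 + b*r2 = c * ((3+a')*p2' + b'*r2'))
    (h2 : (3+a)*p3 + b*r3 = c * ((3+a')*p3' + b'*r3'))
    (h3 : b*p1 + (3-a)*r1 = c * (b'*p1' + (3-a')*r1'))
    (h4 : b*p2 + (3-a)*r2 = c * (b'*p2' + (3-a')*r2'))
    (h5 : b*p3 + (3-a)*r3 = c * (b'*p3' + (3-a')*r3')) :
    a = a' ∧ b = b' ∧ n = c*n' ∧ p1 = c*p1' ∧ p2 = c*p2' ∧ p3 = c*p3'
      ∧ r1 = c*r1' ∧ r2 = c*r2' ∧ r3 = c*r3' := by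
  set g : ℝ := (3+a)*p1 + b*r1 with hgdef
  set g' : ℝ := (3+a')*p1' + b'*r1' with hgdef'
  have hc : 0 < c := pos_scale hT hT' h0
  -- sums of squares
  have hsum : g^2 + ((3+a)*p2 + b*r2)^2 + ((3+a)*p3 + b*r3)^2 + (b*p1 + (3-a)*r1)^2
      + (b*p2 + (3-a)*r2)^2 + (b*p3 + (3-a)*r3)^2 = 20*n^2 := by
    linear_combination ((3+a)^2+b^2)*I1 + (b^2+(3-a)^2)*I2 + 12*b*I3 + 2*n^2*hx
  have hsum' : g'^2 + ((3+a')*p2' + b'*r2')^2 + ((3+a')*p3' + b'*r3')^2 + (b'*p1' + (3-a')*r1')^2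
      + (b'*p2' + (3-a')*r2')^2 + (b'*p3' + (3-a')*r3')^2 = 20*n'^2 := by
    linear_combination ((3+a')^2+b'^2)*I1' + (b'^2+(3-a')^2)*I2' + 12*b'*I3' + 2*n'^2*hx'
  have hA : ((3+a)*p2 + b*r2)^2 + ((3+a)*p3 + b*r3)^2 + (b*p1 + (3-a)*r1)^2
      + (b*p2 + (3-a)*r2)^2 + (b*p3 + (3-a)*r3)^2
      = c^2*(((3+a')*p2' + b'*r2')^2 + ((3+a')*p3' + b'*r3')^2 + (b'*p1' + (3-a')*r1')^2
      + (b'*p2' + (3-a')*r2')^2 + (b'*p3' + (3-a')*r3')^2) := by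
    linear_combination ((3+a)*p2 + b*r2 + c*((3+a')*p2' + b'*r2'))*h1
      + ((3+a)*p3 + b*r3 + c*((3+a')*p3' + b'*r3'))*h2
      + (b*p1 + (3-a)*r1 + c*(b'*p1' + (3-a')*r1'))*h3
      + (b*p2 + (3-a)*r2 + c*(b'*p2' + (3-a')*r2'))*h4
      + (b*p3 + (3-a)*r3 + c*(b'*p3' + (3-a')*r3'))*h5
  have hG1 : g^2 - 20*n^2 = c^2*g'^2 - 20*c^2*n'^2 := by
    linear_combination hsum - c^2*hsum' - hA
  have hfac : (n - c*n') * (2*c*(rr*g' - 20*n')) = 0 := by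
    linear_combination hG1 + (g + rr*n - c*rr*n' + c*g') * h0 - (n-c*n')^2 * rr_sq
  have hneg : rr*g' - 20*n' < 0 := neg_fact hT' hn'
  have hnc : n = c*n' := by
    rcases mul_eq_zero.1 hfac with h | h
    · linarith [sub_eq_zero.1 h]
    · exfalso
      have h2c : 0 < 2*c := by linarith
      exact absurd h (ne_of_lt (mul_neg_of_pos_of_neg h2c hneg))
  have hg : g = c*g' := by linear_combination rr*hnc - h0
  -- recover a
  have hcol : g^2 + ((3+a)*p2 + b*r2)^2 + ((3+a)*p3 + b*r3)^2 = (9+6*a+a^2+b^2)*n^2 := by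
    linear_combination (3+a)^2*I1 + b^2*I2 + 2*(3+a)*b*I3
  have hcol' : g'^2 + ((3+a')*p2' + b'*r2')^2 + ((3+a')*p3' + b'*r3')^2
      = (9+6*a'+a'^2+b'^2)*n'^2 := by
    linear_combination (3+a')^2*I1' + b'^2*I2' + 2*(3+a')*b'*I3'
  have e1c : g^2 + ((3+a)*p2 + b*r2)^2 + ((3+a)*p3 + b*r3)^2
      = c^2*(g'^2 + ((3+a')*p2' + b'*r2')^2 + ((3+a')*p3' + b'*r3')^2) := by
    linear_combination (g+c*g')*hg + ((3+a)*p2 + b*r2 + c*((3+a')*p2' + b'*r2'))*h1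
      + ((3+a)*p3 + b*r3 + c*((3+a')*p3' + b'*r3'))*h2
  have haa : 6*(a-a')*n^2 = 0 := by
    linear_combination (-1)*hcol + c^2*hcol' + e1c - n^2*hx + c^2*n'^2*hx'
      - (10+6*a')*(n+c*n')*hnc
  have ha : a = a' := by
    have := factor_zero hn (by linear_combination haa : 6*(a-a')*n^2 = 0)
    linarith
  have hdot : g*(b*p1 + (3-a)*r1) + ((3+a)*p2 + b*r2)*(b*p2 + (3-a)*r2)
      + ((3+a)*p3 + b*r3)*(b*p3 + (3-a)*r3) = 6*b*n^2 := by
    linear_combination (3+a)*b*I1 + b*(3-a)*I2 + ((3+a)*(3-a)+b^2)*I3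
  have hdot' : g'*(b'*p1' + (3-a')*r1') + ((3+a')*p2' + b'*r2')*(b'*p2' + (3-a')*r2')
      + ((3+a')*p3' + b'*r3')*(b'*p3' + (3-a')*r3') = 6*b'*n'^2 := by
    linear_combination (3+a')*b'*I1' + b'*(3-a')*I2' + ((3+a')*(3-a')+b'^2)*I3'
  have hdotc : g*(b*p1 + (3-a)*r1) + ((3+a)*p2 + b*r2)*(b*p2 + (3-a)*r2)
      + ((3+a)*p3 + b*r3)*(b*p3 + (3-a)*r3)
      = c^2*(g'*(b'*p1' + (3-a')*r1') + ((3+a')*p2' + b'*r2')*(b'*p2' + (3-a')*r2')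
      + ((3+a')*p3' + b'*r3')*(b'*p3' + (3-a')*r3')) := by
    linear_combination (b*p1 + (3-a)*r1)*hg + c*g'*h3
      + (b*p2 + (3-a)*r2)*h1 + c*((3+a')*p2' + b'*r2')*h4
      + (b*p3 + (3-a)*r3)*h2 + c*((3+a')*p3' + b'*r3')*h5
  have hbb : 6*(b-b')*n^2 = 0 := by
    linear_combination (-1)*hdot + c^2*hdot' + hdotc - 6*b'*(n+c*n')*hnc
  have hb : b = b' := by
    have := factor_zero hn (by linear_combination hbb : 6*(b-b')*n^2 = 0)
    linarith
  subst ha hb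
  refine ⟨rfl, rfl, hnc, ?_, ?_, ?_, ?_, ?_, ?_⟩
  · have h8 : 8*p1 = c*(8*p1') := by
      linear_combination (3-a)*hg - b*h3 + p1*hx - c*p1'*hx
    linarith
  · have h8 : 8*p2 = c*(8*p2') := by
      linear_combination (3-a)*h1 - b*h4 + p2*hx - c*p2'*hx
    linarith
  · have h8 : 8*p3 = c*(8*p3') := by
      linear_combination (3-a)*h2 - b*h5 + p3*hx - c*p3'*hx
    linarith
  · have h8 : 8*r1 = c*(8*r1') := by
      linear_combination (3+a)*h3 - b*hg + r1*hx - c*r1'*hx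
    linarith
  · have h8 : 8*r2 = c*(8*r2') := by
      linear_combination (3+a)*h4 - b*h1 + r2*hx - c*r2'*hx
    linarith
  · have h8 : 8*r3 = c*(8*r3') := by
      linear_combination (3+a)*h5 - b*h2 + r3*hx - c*r3'*hx
    linarith



/- ### quaternion layer -/
def qI : ℍ[ℝ] := ⟨0,1,0,0⟩
def qJ : ℍ[ℝ] := ⟨0,0,1,0⟩
def Pq (v : Fin 4 → ℝ) : ℍ[ℝ] := ⟨v 0, v 1, v 2, v 3⟩

lemma Pq_ne {v : Fin 4 → ℝ} (hv : v ≠ 0) : Pq v ≠ 0 := by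
  intro h
  apply hv
  funext i
  fin_cases i
  · exact congrArg QuaternionAlgebra.re h
  · exact congrArg QuaternionAlgebra.imI h
  · exact congrArg QuaternionAlgebra.imJ h
  · exact congrArg QuaternionAlgebra.imK h

lemma normSq_Pq (v : Fin 4 → ℝ) : normSq (Pq v) = nn v := by
  rw [Quaternion.normSq_def', Pq, nn]

lemma bridge_i (v : Fin 4 → ℝ) : Pq v * qI * star (Pq v) = (⟨0, u1 v, u2 v, u3 v⟩ : ℍ[ℝ]) := by
  apply Quaternion.ext <;>
    simp only [Quaternion.re_mul, Quaternion.imI_mul, Quaternion.imJ_mul,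
      Quaternion.imK_mul, Quaternion.re_star, Quaternion.imI_star, Quaternion.imJ_star,
      Quaternion.imK_star] <;> simp only [Pq, qI, u1, u2, u3] <;> ring

lemma bridge_j (v : Fin 4 → ℝ) : Pq v * qJ * star (Pq v) = (⟨0, w1 v, w2 v, w3 v⟩ : ℍ[ℝ]) := by
  apply Quaternion.ext <;>
    simp only [Quaternion.re_mul, Quaternion.imI_mul, Quaternion.imJ_mul,
      Quaternion.imK_mul, Quaternion.re_star, Quaternion.imI_star, Quaternion.imJ_star,
      Quaternion.imK_star] <;> simp only [Pq, qJ, w1, w2, w3] <;> ring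

lemma comm_of_sandwich (S W : ℍ[ℝ]) (m : ℝ) (hm : m ≠ 0)
    (hss' : star S * S = (m : ℍ[ℝ]))
    (h : S * W * star S = (m : ℍ[ℝ]) * W) : S * W = W * S := by
  have hmne : ((m : ℝ) : ℍ[ℝ]) ≠ 0 := by
    rw [← Quaternion.coe_zero]; exact fun hh => hm (Quaternion.coe_injective hh)
  have h2 : S * W * (star S * S) = (m : ℍ[ℝ]) * W * S := by
    rw [← mul_assoc, h]
  rw [hss'] at h2
  have h3 : ((m : ℝ) : ℍ[ℝ]) * (S * W) = ((m : ℝ) : ℍ[ℝ]) * (W * S) := by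
    calc ((m : ℝ) : ℍ[ℝ]) * (S * W) = (S * W) * ((m : ℝ) : ℍ[ℝ]) := (Quaternion.coe_commutes m _)
    _ = (m : ℍ[ℝ]) * W * S := h2
    _ = ((m : ℝ) : ℍ[ℝ]) * (W * S) := by rw [mul_assoc]
  exact mul_left_cancel₀ hmne h3

lemma quat_core (P P' : ℍ[ℝ]) (c : ℝ) (hP : P ≠ 0) (hP' : P' ≠ 0) (hcn : normSq P = c * normSq P')
    (h1 : P * qI * star P = c • (P' * qI * star P'))
    (h2 : P * qJ * star P = c • (P' * qJ * star P')) :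
    ∃ d : ℝ, d ≠ 0 ∧ (d : ℍ[ℝ]) * P' = P := by
  set S : ℍ[ℝ] := star P' * P with hS
  set m : ℝ := normSq P' * normSq P with hmdef
  have hmne0 : m ≠ 0 := mul_ne_zero (normSq_ne_zero.2 hP') (normSq_ne_zero.2 hP)
  have hss' : star S * S = (m : ℍ[ℝ]) := by
    rw [Quaternion.star_mul_self, hS, map_mul normSq, Quaternion.normSq_star, hmdef]
  have key : ∀ W : ℍ[ℝ], (P * W * star P = c • (P' * W * star P')) →
      S * W * star S = (m : ℍ[ℝ]) * W := by
    intro W hW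
    have e0 : S * W * star S = star P' * (P * W * star P) * P' := by
      rw [hS]
      simp only [star_mul, star_star]
      simp only [mul_assoc]
    rw [e0, hW]
    have e1 : star P' * P' = ((normSq P' : ℝ) : ℍ[ℝ]) := Quaternion.star_mul_self P'
    calc star P' * (c • (P' * W * star P')) * P'
        = c • (star P' * (P' * W * star P') * P') := by
          rw [mul_smul_comm, smul_mul_assoc]
      _ = c • ((star P' * P') * W * (star P' * P')) := by
          congr 1
          simp only [mul_assoc]
      _ = c • (((normSq P' : ℝ) : ℍ[ℝ]) * W * ((normSq P' : ℝ) : ℍ[ℝ])) := by rw [e1]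
      _ = (m : ℍ[ℝ]) * W := by
          rw [Quaternion.mul_coe_eq_smul, Quaternion.coe_mul_eq_smul, smul_smul, smul_smul,
            ← Quaternion.coe_mul_eq_smul]
          congr 2
          rw [hmdef, hcn]; ring
  have ci : S * qI = qI * S := comm_of_sandwich S qI m hmne0 hss' (key _ h1)
  have cj : S * qJ = qJ * S := comm_of_sandwich S qJ m hmne0 hss' (key _ h2)
  have hJ : S.imJ = 0 := by
    have := congrArg QuaternionAlgebra.imK ci
    simp only [Quaternion.imK_mul] at this
    simp [qI] at this
    linarith
  have hK : S.imK = 0 := by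
    have := congrArg QuaternionAlgebra.imJ ci
    simp only [Quaternion.imJ_mul] at this
    simp [qI] at this
    linarith
  have hI : S.imI = 0 := by
    have := congrArg QuaternionAlgebra.imK cj
    simp only [Quaternion.imK_mul] at this
    simp [qJ] at this
    linarith
  have hSreal : S = ((S.re : ℝ) : ℍ[ℝ]) := by
    apply Quaternion.ext <;> simp [hI, hJ, hK]
  have hs0 : S.re ≠ 0 := by
    intro h0
    have hnz : normSq S = 0 := by rw [Quaternion.normSq_def', hI, hJ, hK, h0]; ring
    rw [hS, map_mul normSq, Quaternion.normSq_star] at hnz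
    exact hmne0 (by rw [hmdef]; exact hnz)
  refine ⟨S.re / normSq P', div_ne_zero hs0 (normSq_ne_zero.2 hP'), ?_⟩
  have e2 : P' * S = ((normSq P' : ℝ) : ℍ[ℝ]) * P := by
    rw [hS, ← mul_assoc, Quaternion.self_mul_star]
  rw [hSreal] at e2
  rw [Quaternion.mul_coe_eq_smul, Quaternion.coe_mul_eq_smul] at e2
  rw [Quaternion.coe_mul_eq_smul, div_eq_mul_inv, mul_comm, ← smul_smul, e2, smul_smul,
    inv_mul_cancel₀ (normSq_ne_zero.2 hP'), one_smul]

/- ### concrete injectivity core -/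
lemma concrete_core {a b a' b' : ℝ} {v v' : Fin 4 → ℝ}
    (hx : a^2 + b^2 = 1) (hx' : a'^2 + b'^2 = 1) (hv : v ≠ 0) (hv' : v' ≠ 0) {c : ℝ}
    (h : ∀ i, Et a b v i = c * Et a' b' v' i) :
    a = a' ∧ b = b' ∧ ∃ d : ℝ, d ≠ 0 ∧ d • v' = v := by
  have I1 : (u1 v)^2 + (u2 v)^2 + (u3 v)^2 = (nn v)^2 := by
    simp only [u1, u2, u3, nn]; ring
  have I2 : (w1 v)^2 + (w2 v)^2 + (w3 v)^2 = (nn v)^2 := by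
    simp only [w1, w2, w3, nn]; ring
  have I3 : (u1 v)*(w1 v) + (u2 v)*(w2 v) + (u3 v)*(w3 v) = 0 := by
    simp only [u1, u2, u3, w1, w2, w3]; ring
  have I1' : (u1 v')^2 + (u2 v')^2 + (u3 v')^2 = (nn v')^2 := by
    simp only [u1, u2, u3, nn]; ring
  have I2' : (w1 v')^2 + (w2 v')^2 + (w3 v')^2 = (nn v')^2 := by
    simp only [w1, w2, w3, nn]; ring
  have I3' : (u1 v')*(w1 v') + (u2 v')*(w2 v') + (u3 v')*(w3 v') = 0 := by
    simp only [u1, u2, u3, w1, w2, w3]; ring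
  have habs := abstract_core a b a' b' c (nn v) (nn v') (u1 v) (u2 v) (u3 v)
    (w1 v) (w2 v) (w3 v) (u1 v') (u2 v') (u3 v') (w1 v') (w2 v') (w3 v')
    hx hx' (nn_pos hv) (nn_pos hv') I1 I2 I3 I1' I2' I3' (Tpos hx hv) (Tpos hx' hv')
    (h 0) (h 1) (h 2) (h 3) (h 4) (h 5)
  obtain ⟨ha, hb, hnc, hp1, hp2, hp3, hr1, hr2, hr3⟩ := habs
  refine ⟨ha, hb, ?_⟩
  -- quaternion step
  have hcn : normSq (Pq v) = c * normSq (Pq v') := by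
    rw [normSq_Pq, normSq_Pq]; exact hnc
  have hQI : Pq v * qI * star (Pq v) = c • (Pq v' * qI * star (Pq v')) := by
    rw [bridge_i, bridge_i]
    apply Quaternion.ext <;>
      simp only [Quaternion.re_smul, Quaternion.imI_smul, Quaternion.imJ_smul,
        Quaternion.imK_smul, smul_eq_mul]
    · exact (mul_zero c).symm
    · exact hp1
    · exact hp2
    · exact hp3
  have hQJ : Pq v * qJ * star (Pq v) = c • (Pq v' * qJ * star (Pq v')) := by
    rw [bridge_j, bridge_j]
    apply Quaternion.ext <;>
      simp only [Quaternion.re_smul, Quaternion.imI_smul, Quaternion.imJ_smul,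
        Quaternion.imK_smul, smul_eq_mul]
    · exact (mul_zero c).symm
    · exact hr1
    · exact hr2
    · exact hr3
  obtain ⟨d, hd, hdP⟩ := quat_core (Pq v) (Pq v') c (Pq_ne hv) (Pq_ne hv') hcn hQI hQJ
  refine ⟨d, hd, ?_⟩
  rw [Quaternion.coe_mul_eq_smul] at hdP
  funext i
  have hre := congrArg QuaternionAlgebra.re hdP
  have himI := congrArg QuaternionAlgebra.imI hdP
  have himJ := congrArg QuaternionAlgebra.imJ hdP
  have himK := congrArg QuaternionAlgebra.imK hdP
  simp only [Quaternion.re_smul, Quaternion.imI_smul, Quaternion.imJ_smul, Quaternion.imK_smul,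
    smul_eq_mul, Pq] at hre himI himJ himK
  fin_cases i
  · exact hre
  · exact himI
  · exact himJ
  · exact himK

-- TOPOLOGY/ASSEMBLY LAYER (to append after core math, inside namespace RP5E)
-- assume: everything from core.lean, plus the pinned preamble definitions

lemma circ_sq {x : EuclideanSpace ℝ (Fin 2)} (hx : x ∈ Metric.sphere (0 : EuclideanSpace ℝ (Fin 2)) 1) :
    (x 0)^2 + (x 1)^2 = 1 := by
  have h1 : ‖x‖ = 1 := by simpa using hx
  rw [EuclideanSpace.norm_eq] at h1
  rw [Real.sqrt_eq_one] at h1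
  simpa [Fin.sum_univ_two, Real.norm_eq_abs, sq_abs] using h1

/-- the setoid relation unfolded -/
lemma rel_iff {n : ℕ} (vv ww : {y : Fin (n+1) → ℝ // y ≠ 0}) :
    (projectivizationSetoid ℝ (Fin (n+1) → ℝ)).r vv ww ↔ ∃ u : ℝˣ, u • (ww : Fin (n+1) → ℝ) = vv := by
  change (vv : Fin (n+1) → ℝ) ∈ MulAction.orbit ℝˣ (ww : Fin (n+1) → ℝ) ↔ _
  exact MulAction.mem_orbit_iff

def fmap : Circ × RPt 3 → RPt 5 := fun p =>
  Quotient.liftOn' p.2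
    (fun vv => Projectivization.mk ℝ (Et ((p.1 : EuclideanSpace ℝ (Fin 2)) 0)
      ((p.1 : EuclideanSpace ℝ (Fin 2)) 1) vv.1) (Et_ne (circ_sq p.1.2) vv.2))
    (by
      intro vv ww hrel
      obtain ⟨u, hu⟩ := (rel_iff vv ww).1 hrel
      have hvv : ((u:ℝ)) • (ww : Fin 4 → ℝ) = vv := by
        simpa [Units.smul_def] using hu
      apply (Projectivization.mk_eq_mk_iff ℝ _ _ _ _).2
      refine ⟨(Units.mk0 ((u:ℝ)^2) (pow_ne_zero 2 u.ne_zero)), ?_⟩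
      calc (Units.mk0 ((u:ℝ)^2) (pow_ne_zero 2 u.ne_zero)) • Et _ _ ww.1
          = ((u:ℝ)^2) • Et _ _ ww.1 := rfl
        _ = Et _ _ (((u:ℝ)) • ww.1) := (Et_smul _ _ _ _).symm
        _ = Et _ _ vv.1 := by rw [hvv])

lemma fmap_mk (x : Circ) (v : Fin 4 → ℝ) (hv : v ≠ 0) :
    fmap (x, Projectivization.mk ℝ v hv)
      = Projectivization.mk ℝ (Et ((x : EuclideanSpace ℝ (Fin 2)) 0)
          ((x : EuclideanSpace ℝ (Fin 2)) 1) v) (Et_ne (circ_sq x.2) hv) := rfl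

lemma fmap_inj : Function.Injective fmap := by
  rintro ⟨x, m⟩ ⟨x', m'⟩ h
  induction m using Projectivization.ind with
  | h v hv =>
  induction m' using Projectivization.ind with
  | h v' hv' =>
  rw [fmap_mk, fmap_mk] at h
  obtain ⟨cc, hcc⟩ := (Projectivization.mk_eq_mk_iff' ℝ _ _ _ _).1 h
  have hcomp : ∀ i, Et ((x : EuclideanSpace ℝ (Fin 2)) 0) ((x : EuclideanSpace ℝ (Fin 2)) 1) v i
      = cc * Et ((x' : EuclideanSpace ℝ (Fin 2)) 0) ((x' : EuclideanSpace ℝ (Fin 2)) 1) v' i := by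
    intro i
    have := congrFun hcc i
    simpa using this.symm
  obtain ⟨ha, hb, d, hd, hdv⟩ := concrete_core (circ_sq x.2) (circ_sq x'.2) hv hv' hcomp
  have hx : x = x' := by
    apply Subtype.ext
    ext i
    fin_cases i
    · exact ha
    · exact hb
  have hm : Projectivization.mk ℝ v hv = Projectivization.mk ℝ v' hv' := by
    exact (Projectivization.mk_eq_mk_iff' ℝ _ _ _ _).2 ⟨d, hdv⟩
  rw [hx, hm]
/- ### the projectivization quotient map is an open quotient map -/
def mkS : {y : Fin 4 → ℝ // y ≠ 0} → RPt 3 := Projectivization.mk' ℝ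

lemma continuous_mkS : Continuous mkS := by
  rw [continuous_def]; intro U hU; exact hU

lemma surjective_mkS : Function.Surjective mkS := fun q =>
  Quotient.inductionOn' q fun vv => ⟨vv, rfl⟩

def sigmaU (u : ℝˣ) (vv : {y : Fin 4 → ℝ // y ≠ 0}) : {y : Fin 4 → ℝ // y ≠ 0} :=
  ⟨(u : ℝ) • vv.1, by
    intro h
    apply vv.2
    have := congrArg (fun z => (u : ℝ)⁻¹ • z) h
    simpa [smul_smul, inv_mul_cancel₀ u.ne_zero] using this⟩

lemma continuous_sigmaU (u : ℝˣ) : Continuous (sigmaU u) := by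
  apply Continuous.subtype_mk
  exact (continuous_subtype_val (p := fun y : Fin 4 → ℝ => y ≠ 0)).const_smul (u : ℝ)

lemma isOpenMap_mkS : IsOpenMap mkS := by
  intro U hU
  have hset : mkS ⁻¹' (mkS '' U) = ⋃ u : ℝˣ, sigmaU u ⁻¹' U := by
    ext vv
    simp only [Set.mem_preimage, Set.mem_image, Set.mem_iUnion]
    constructor
    · rintro ⟨ww, hwU, hww⟩
      have : (projectivizationSetoid ℝ (Fin 4 → ℝ)).r ww vv := Quotient.exact' hww
      obtain ⟨u, hu⟩ := (rel_iff ww vv).1 this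
      refine ⟨u, ?_⟩
      have : sigmaU u vv = ww := Subtype.ext hu
      rwa [this]
    · rintro ⟨u, hmem⟩
      refine ⟨sigmaU u vv, hmem, ?_⟩
      apply Quotient.sound'
      apply (rel_iff _ _).2
      exact ⟨u, rfl⟩
  show IsOpen (mkS ⁻¹' (mkS '' U))
  rw [hset]
  exact isOpen_iUnion fun u => (continuous_sigmaU u).isOpen_preimage U hU

lemma isOpenQuotientMap_mkS : IsOpenQuotientMap mkS :=
  ⟨surjective_mkS, continuous_mkS, isOpenMap_mkS⟩

/- ### compactness of RPt 3 -/
lemma compactSpace_RPt3 : CompactSpace (RPt 3) := by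
  set g4 : Metric.sphere (0 : EuclideanSpace ℝ (Fin 4)) 1 → RPt 3 := fun v =>
    mkS ⟨(v : EuclideanSpace ℝ (Fin 4)), by
      intro h
      have h1 : ‖(v : EuclideanSpace ℝ (Fin 4))‖ = 1 := by simpa using v.2
      rw [show (v : EuclideanSpace ℝ (Fin 4)) = 0 from (WithLp.ofLp_eq_zero 2).1 h] at h1
      simp at h1⟩ with hg4
  have hcont : Continuous g4 := by
    apply continuous_mkS.comp
    apply Continuous.subtype_mk
    exact (PiLp.continuous_ofLp 2 _).comp continuous_subtype_val
  have hsurj : Function.Surjective g4 := by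
    intro q
    induction q using Projectivization.ind with
    | h v hv =>
    let ve : EuclideanSpace ℝ (Fin 4) := WithLp.toLp 2 v
    have hv' : ve ≠ 0 := fun h => hv ((WithLp.toLp_eq_zero 2).1 h)
    have hnv : ‖ve‖ ≠ 0 := norm_ne_zero_iff.2 hv'
    have hcne : ‖ve‖⁻¹ ≠ 0 := inv_ne_zero hnv
    refine ⟨⟨‖ve‖⁻¹ • ve, ?_⟩, ?_⟩
    · rw [mem_sphere_zero_iff_norm, norm_smul, norm_inv, norm_norm]
      exact inv_mul_cancel₀ hnv
    · show mkS ⟨‖ve‖⁻¹ • v, _⟩ = Projectivization.mk ℝ v hv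
      apply Quotient.sound'
      apply (rel_iff _ _).2
      exact ⟨Units.mk0 (‖ve‖⁻¹) hcne, rfl⟩
  constructor
  rw [← Set.range_eq_univ.2 hsurj]
  exact isCompact_range hcont

/- ### separating map on RPt 5 -/
lemma sumsq_pos {m : ℕ} {y : Fin m → ℝ} (hy : y ≠ 0) : 0 < ∑ k, (y k)^2 := by
  obtain ⟨i, hi⟩ := Function.ne_iff.1 hy
  refine Finset.sum_pos' (fun k _ => sq_nonneg _) ⟨i, Finset.mem_univ i, ?_⟩
  have : y i ≠ 0 := hi
  positivity

def phi0 : {y : Fin 6 → ℝ // y ≠ 0} → (Fin 6 → Fin 6 → ℝ) := fun y i j =>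
  y.1 i * y.1 j / (∑ k, (y.1 k)^2)

def Phi : RPt 5 → (Fin 6 → Fin 6 → ℝ) := fun q =>
  Quotient.liftOn' q phi0
    (by
      intro vv ww hrel
      obtain ⟨u, hu⟩ := (rel_iff vv ww).1 hrel
      have hvv : ((u:ℝ)) • (ww : Fin 6 → ℝ) = vv := by
        simpa [Units.smul_def] using hu
      funext i j
      rw [phi0, phi0]
      rw [← hvv]
      have hsum : ∑ k, ((u : ℝ) • ww.1) k ^2 = (u:ℝ)^2 * ∑ k, (ww.1 k)^2 := by
        rw [Finset.mul_sum]
        congr 1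
        funext k
        rw [Pi.smul_apply, smul_eq_mul]
        ring
      rw [hsum]
      have h2 : ((u:ℝ) • ww.1) i * ((u:ℝ) • ww.1) j = (u:ℝ)^2 * (ww.1 i * ww.1 j) := by
        rw [Pi.smul_apply, Pi.smul_apply, smul_eq_mul, smul_eq_mul]; ring
      rw [h2]
      rw [mul_div_mul_left _ _ (pow_ne_zero 2 u.ne_zero)])

lemma Phi_mk (y : Fin 6 → ℝ) (hy : y ≠ 0) :
    Phi (Projectivization.mk ℝ y hy) = fun i j => y i * y j / (∑ k, (y k)^2) := rfl

lemma continuous_phi0 : Continuous phi0 := by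
  apply continuous_pi
  intro i
  apply continuous_pi
  intro j
  apply Continuous.div
  · exact ((continuous_apply i).comp continuous_subtype_val).mul
      ((continuous_apply j).comp continuous_subtype_val)
  · apply continuous_finset_sum
    intro k _
    exact (((continuous_apply k).comp continuous_subtype_val).pow 2)
  · intro y
    exact ne_of_gt (sumsq_pos y.2)

lemma continuous_Phi : Continuous Phi := by
  rw [continuous_def]
  intro U hU
  show IsOpen ((Projectivization.mk' ℝ) ⁻¹' (Phi ⁻¹' U))
  exact continuous_phi0.isOpen_preimage U hU

lemma Phi_inj : Function.Injective Phi := by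
  intro q q'
  induction q using Projectivization.ind with
  | h y hy =>
  induction q' using Projectivization.ind with
  | h y' hy' =>
  intro h
  have H : ∀ i j, y i * y j / (∑ k, (y k)^2) = y' i * y' j / (∑ k, (y' k)^2) :=
    fun i j => congrFun (congrFun h i) j
  set S : ℝ := ∑ k, (y k)^2 with hS
  set S' : ℝ := ∑ k, (y' k)^2 with hS'
  have hSpos : 0 < S := sumsq_pos hy
  have hS'pos : 0 < S' := sumsq_pos hy'
  obtain ⟨k0, hk0⟩ := Function.ne_iff.1 hy'
  have hk0' : (y' k0 : ℝ) ≠ 0 := hk0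
  have hyk0 : y k0 ≠ 0 := by
    intro h0
    have hHH := H k0 k0
    rw [h0] at hHH
    simp only [zero_mul, zero_div] at hHH
    have hpos : 0 < y' k0 * y' k0 / S' := div_pos (mul_self_pos.2 hk0') hS'pos
    exact (ne_of_gt hpos) hHH.symm
  apply (Projectivization.mk_eq_mk_iff' ℝ _ _ _ _).2
  refine ⟨y' k0 * S / (S' * y k0), ?_⟩
  funext i
  have hik := H i k0
  have hSne : S ≠ 0 := ne_of_gt hSpos
  have hS'ne : S' ≠ 0 := ne_of_gt hS'pos
  have hexp : y i * y k0 * S' = y' i * y' k0 * S := by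
    field_simp at hik
    linarith [hik]
  show (y' k0 * S / (S' * y k0)) * y' i = y i
  rw [div_mul_eq_mul_div, div_eq_iff (mul_ne_zero hS'ne hyk0)]
  linear_combination -hexp

/- ### smooth global lift -/
def Ft : (EuclideanSpace ℝ (Fin 2)) × (Fin 4 → ℝ) → (Fin 6 → ℝ) := fun q =>
  Et (q.1 0) (q.1 1) q.2

lemma contDiff_Ft : ContDiff ℝ (⊤ : ℕ∞) Ft := by
  have h0 : ContDiff ℝ (⊤ : ℕ∞) (fun q : (EuclideanSpace ℝ (Fin 2)) × (Fin 4 → ℝ) => q.1 0) :=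
    (EuclideanSpace.proj (0 : Fin 2) :
      EuclideanSpace ℝ (Fin 2) →L[ℝ] ℝ).contDiff.comp contDiff_fst
  have h1 : ContDiff ℝ (⊤ : ℕ∞) (fun q : (EuclideanSpace ℝ (Fin 2)) × (Fin 4 → ℝ) => q.1 1) :=
    (EuclideanSpace.proj (1 : Fin 2) :
      EuclideanSpace ℝ (Fin 2) →L[ℝ] ℝ).contDiff.comp contDiff_fst
  have hv : ∀ i : Fin 4, ContDiff ℝ (⊤ : ℕ∞)
      (fun q : (EuclideanSpace ℝ (Fin 2)) × (Fin 4 → ℝ) => q.2 i) := fun i =>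
    (ContinuousLinearMap.proj i :
      (Fin 4 → ℝ) →L[ℝ] ℝ).contDiff.comp contDiff_snd
  have hv0 := hv 0; have hv1 := hv 1; have hv2 := hv 2; have hv3 := hv 3
  have hu1 : ContDiff ℝ (⊤ : ℕ∞) (fun q : (EuclideanSpace ℝ (Fin 2)) × (Fin 4 → ℝ) => u1 q.2) :=
    (((hv0.pow 2).add (hv1.pow 2)).sub (hv2.pow 2)).sub (hv3.pow 2)
  have hu2 : ContDiff ℝ (⊤ : ℕ∞) (fun q : (EuclideanSpace ℝ (Fin 2)) × (Fin 4 → ℝ) => u2 q.2) :=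
    contDiff_const.mul ((hv1.mul hv2).add (hv0.mul hv3))
  have hu3 : ContDiff ℝ (⊤ : ℕ∞) (fun q : (EuclideanSpace ℝ (Fin 2)) × (Fin 4 → ℝ) => u3 q.2) :=
    contDiff_const.mul ((hv1.mul hv3).sub (hv0.mul hv2))
  have hw1 : ContDiff ℝ (⊤ : ℕ∞) (fun q : (EuclideanSpace ℝ (Fin 2)) × (Fin 4 → ℝ) => w1 q.2) :=
    contDiff_const.mul ((hv1.mul hv2).sub (hv0.mul hv3))
  have hw2 : ContDiff ℝ (⊤ : ℕ∞) (fun q : (EuclideanSpace ℝ (Fin 2)) × (Fin 4 → ℝ) => w2 q.2) :=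
    (((hv0.pow 2).sub (hv1.pow 2)).add (hv2.pow 2)).sub (hv3.pow 2)
  have hw3 : ContDiff ℝ (⊤ : ℕ∞) (fun q : (EuclideanSpace ℝ (Fin 2)) × (Fin 4 → ℝ) => w3 q.2) :=
    contDiff_const.mul ((hv2.mul hv3).add (hv0.mul hv1))
  have hnn : ContDiff ℝ (⊤ : ℕ∞) (fun q : (EuclideanSpace ℝ (Fin 2)) × (Fin 4 → ℝ) => nn q.2) :=
    (((hv0.pow 2).add (hv1.pow 2)).add (hv2.pow 2)).add (hv3.pow 2)
  apply contDiff_pi.2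
  intro i
  fin_cases i
  · show ContDiff ℝ (⊤ : ℕ∞) fun q : (EuclideanSpace ℝ (Fin 2)) × (Fin 4 → ℝ) =>
      rr * nn q.2 - ((3 + q.1 0) * u1 q.2 + q.1 1 * w1 q.2)
    exact (contDiff_const.mul hnn).sub (((contDiff_const.add h0).mul hu1).add (h1.mul hw1))
  · show ContDiff ℝ (⊤ : ℕ∞) fun q : (EuclideanSpace ℝ (Fin 2)) × (Fin 4 → ℝ) =>
      (3 + q.1 0) * u2 q.2 + q.1 1 * w2 q.2
    exact ((contDiff_const.add h0).mul hu2).add (h1.mul hw2)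
  · show ContDiff ℝ (⊤ : ℕ∞) fun q : (EuclideanSpace ℝ (Fin 2)) × (Fin 4 → ℝ) =>
      (3 + q.1 0) * u3 q.2 + q.1 1 * w3 q.2
    exact ((contDiff_const.add h0).mul hu3).add (h1.mul hw3)
  · show ContDiff ℝ (⊤ : ℕ∞) fun q : (EuclideanSpace ℝ (Fin 2)) × (Fin 4 → ℝ) =>
      q.1 1 * u1 q.2 + (3 - q.1 0) * w1 q.2
    exact (h1.mul hu1).add ((contDiff_const.sub h0).mul hw1)
  · show ContDiff ℝ (⊤ : ℕ∞) fun q : (EuclideanSpace ℝ (Fin 2)) × (Fin 4 → ℝ) =>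
      q.1 1 * u2 q.2 + (3 - q.1 0) * w2 q.2
    exact (h1.mul hu2).add ((contDiff_const.sub h0).mul hw2)
  · show ContDiff ℝ (⊤ : ℕ∞) fun q : (EuclideanSpace ℝ (Fin 2)) × (Fin 4 → ℝ) =>
      q.1 1 * u3 q.2 + (3 - q.1 0) * w3 q.2
    exact (h1.mul hu3).add ((contDiff_const.sub h0).mul hw3)

lemma continuous_fmap : Continuous fmap := by
  have hq : IsOpenQuotientMap (Prod.map (id : Circ → Circ) mkS) :=
    IsOpenQuotientMap.id.prodMap isOpenQuotientMap_mkS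
  rw [hq.isQuotientMap.continuous_iff]
  have heq : fmap ∘ Prod.map (id : Circ → Circ) mkS
      = (Projectivization.mk' ℝ) ∘ (fun p : Circ × {y : Fin 4 → ℝ // y ≠ 0} =>
        (⟨Et ((p.1 : EuclideanSpace ℝ (Fin 2)) 0) ((p.1 : EuclideanSpace ℝ (Fin 2)) 1) p.2.1,
          Et_ne (circ_sq p.1.2) p.2.2⟩ : {z : Fin 6 → ℝ // z ≠ 0})) := rfl
  rw [heq]
  have hmk5 : Continuous (Projectivization.mk' ℝ : {z : Fin 6 → ℝ // z ≠ 0} → RPt 5) := by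
    rw [continuous_def]; intro U hU; exact hU
  apply Continuous.comp hmk5
  apply Continuous.subtype_mk
  have hproj : Continuous fun p : Circ × {y : Fin 4 → ℝ // y ≠ 0} =>
      ((p.1 : EuclideanSpace ℝ (Fin 2)), p.2.1) := by
    apply Continuous.prodMk
    · exact continuous_subtype_val.comp continuous_fst
    · exact continuous_subtype_val.comp continuous_snd
  exact contDiff_Ft.continuous.comp hproj

lemma isSmooth_fmap : IsSmoothCircleRPMap fmap := by
  intro x v hv
  refine ⟨(Set.univ : Set (EuclideanSpace ℝ (Fin 2))) ×ˢ {v : Fin 4 → ℝ | v ≠ 0},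
    isOpen_univ.prod isOpen_ne, ⟨trivial, hv⟩, Ft, contDiff_Ft.contDiffOn, ?_⟩
  rintro p ⟨-, hp2'⟩ hp1 hp2
  refine ⟨Et_ne (circ_sq hp1) hp2, rfl⟩

end RP5E

/-- A smooth embedding `S¹ × ℝP³ → ℝP⁵` exists: realize `S¹ × ℝP³` as the boundary of a
closed tubular neighborhood `D² × ℝP³` of an embedded `ℝP³ ⊂ ℝ⁵` with trivial normal
bundle, and compose with the inclusion of `ℝ⁵` into `ℝP⁵` as an affine chart. -/
theorem exists_smooth_embedding_circle_rp3_into_rp5 :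
    ∃ f : Circ × RPt 3 → RPt 5,
      Topology.IsEmbedding f ∧ IsSmoothCircleRPMap f := by
  haveI : CompactSpace (RPt 3) := RP5E.compactSpace_RPt3
  refine ⟨RP5E.fmap, ?_, RP5E.isSmooth_fmap⟩
  have hc := RP5E.continuous_fmap
  have hcomp : Topology.IsEmbedding (RP5E.Phi ∘ RP5E.fmap) :=
    ((RP5E.continuous_Phi.comp hc).isClosedEmbedding
      (RP5E.Phi_inj.comp RP5E.fmap_inj)).isEmbedding
  exact Topology.IsEmbedding.of_comp hc RP5E.continuous_Phi hcomp

end
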